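/- Consider Bianchi type VI_h subtype (3) with brackets [e₁,e₂]=-he₁+e₃, [e₂,e₃]=-e₁+he₃, [e₃,e₁]=0 and metric g=diag(1,-1,1). The curvature tensor satisfies R₁₂₁₂ = R₂₃₂₃ = h²+1, R₁₃₁₃ = 1-h², R₁₂₂₃ = 2h, and the scalar curvature is τ = 2(3h²+1) > 0 for all real h. -/
import Mathlib


noncomputable section

def e (i : Fin 3) : Fin 3 → ℝ := Pi.single i 1

def gB (x y : Fin 3 → ℝ) : ℝ := x 0 * y 0 - x 1 * y 1 + x 2 * y 2

/-- The inverse metric entries g¹¹=1, g²²=-1, g³³=1. -/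
def ginv : Fin 3 → ℝ := ![1, -1, 1]

/-- The Lie bracket of Bia(VI_h), subtype (3):
[e₁,e₂]=-he₁+e₃, [e₂,e₃]=-e₁+he₃, [e₃,e₁]=0 (bilinear extension). -/
def brVI3 (h : ℝ) (x y : Fin 3 → ℝ) : Fin 3 → ℝ :=
  ![-h * (x 0 * y 1 - x 1 * y 0) - (x 1 * y 2 - x 2 * y 1),
    0,
    (x 0 * y 1 - x 1 * y 0) + h * (x 1 * y 2 - x 2 * y 1)]

/-- The curvature (0,4)-tensor. -/
def Rt (h : ℝ) (nabla : (Fin 3 → ℝ) →ₗ[ℝ] (Fin 3 → ℝ) →ₗ[ℝ] (Fin 3 → ℝ))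
    (x y z w : Fin 3 → ℝ) : ℝ :=
  gB (nabla x (nabla y z) - nabla y (nabla x z) - nabla (brVI3 h x y) z) w

/-- The Ricci tensor. -/
def ricci (h : ℝ) (nabla : (Fin 3 → ℝ) →ₗ[ℝ] (Fin 3 → ℝ) →ₗ[ℝ] (Fin 3 → ℝ))
    (j k : Fin 3) : ℝ :=
  ∑ i, ginv i * Rt h nabla (e i) (e j) (e k) (e i)


/-- Auxiliary: the Levi-Civita connection coefficients table. -/
def NNaux (h : ℝ) (i j : Fin 3) : Fin 3 → ℝ :=
  ![![![0, -h, 0], ![-h, 0, 1], ![0, 1, 0]],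
    ![![0, 0, 0], ![0, 0, 0], ![0, 0, 0]],
    ![![0, 1, 0], ![1, 0, -h], ![0, -h, 0]]] i j

/-- Auxiliary: the curvature values table R(e_a,e_b,e_c,e_d). -/
def RVaux (h : ℝ) (a b c d : Fin 3) : ℝ :=
  ![![![![0,0,0], ![0,0,0], ![0,0,0]],
      ![![0,h^2+1,0], ![-h^2-1,0,2*h], ![0,-2*h,0]],
      ![![0,0,-h^2+1], ![0,0,0], ![h^2-1,0,0]]],
    ![![![0,-h^2-1,0], ![h^2+1,0,-2*h], ![0,2*h,0]],
      ![![0,0,0], ![0,0,0], ![0,0,0]],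
      ![![0,2*h,0], ![-2*h,0,h^2+1], ![0,-h^2-1,0]]],
    ![![![0,0,h^2-1], ![0,0,0], ![-h^2+1,0,0]],
      ![![0,-2*h,0], ![2*h,0,-h^2-1], ![0,h^2+1,0]],
      ![![0,0,0], ![0,0,0], ![0,0,0]]]] a b c d

set_option maxHeartbeats 2000000 in
/-- for Bia(VI_h), subtype (3), R₁₂₁₂ = R₂₃₂₃ = h²+1,
R₁₃₁₃ = 1-h², R₁₂₂₃ = 2h, and the scalar curvature τ = 2(3h²+1) > 0. -/
theorem stmt17 (h : ℝ)
    (nabla : (Fin 3 → ℝ) →ₗ[ℝ] (Fin 3 → ℝ) →ₗ[ℝ] (Fin 3 → ℝ))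
    (hK : ∀ i j k : Fin 3,
      2 * gB (nabla (e i) (e j)) (e k) =
        gB (brVI3 h (e i) (e j)) (e k) + gB (brVI3 h (e k) (e i)) (e j)
          + gB (brVI3 h (e k) (e j)) (e i)) :
    Rt h nabla (e 0) (e 1) (e 0) (e 1) = h ^ 2 + 1 ∧
    Rt h nabla (e 1) (e 2) (e 1) (e 2) = h ^ 2 + 1 ∧
    Rt h nabla (e 0) (e 2) (e 0) (e 2) = 1 - h ^ 2 ∧
    Rt h nabla (e 0) (e 1) (e 1) (e 2) = 2 * h ∧
    (∑ i, ginv i * ricci h nabla i i) = 2 * (3 * h ^ 2 + 1) ∧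
    0 < (∑ i, ginv i * ricci h nabla i i) := by
  have hg : ∀ (x : Fin 3 → ℝ) (k : Fin 3), x k = ginv k * gB x (e k) := by
    intro x k
    fin_cases k <;> simp [gB, e, ginv, Pi.single_apply] <;> ring
  have key : ∀ i j, nabla (e i) (e j) = NNaux h i j := by
    intro i j
    funext k
    have h0 := hK i j k
    rw [hg (nabla (e i) (e j)) k]
    fin_cases i <;> fin_cases j <;> fin_cases k <;>
      simp [gB, e, ginv, brVI3, NNaux, Pi.single_apply, Matrix.vecHead,
        Matrix.vecTail] at h0 ⊢ <;> linarith
  have hexp : ∀ v : Fin 3 → ℝ, v = v 0 • e 0 + v 1 • e 1 + v 2 • e 2 := by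
    intro v
    funext k
    fin_cases k <;> simp [e, Pi.single_apply]
  have hNab : ∀ v w : Fin 3 → ℝ, nabla v w =
      ![-h * (v 0 * w 1) + v 2 * w 1,
        -h * (v 0 * w 0) + v 0 * w 2 + v 2 * w 0 - h * (v 2 * w 2),
        v 0 * w 1 - h * (v 2 * w 1)] := by
    intro v w
    conv_lhs => rw [hexp v, hexp w]
    simp only [map_add, map_smul, LinearMap.add_apply, LinearMap.smul_apply, key]
    funext k
    fin_cases k <;>
      simp [NNaux, Matrix.vecHead, Matrix.vecTail] <;> ring
  have hR : ∀ a b c d : Fin 3, Rt h nabla (e a) (e b) (e c) (e d) =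
      gB (![-h * ((e a) 0 * (nabla (e b) (e c)) 1) + (e a) 2 * (nabla (e b) (e c)) 1,
        -h * ((e a) 0 * (nabla (e b) (e c)) 0) + (e a) 0 * (nabla (e b) (e c)) 2 + (e a) 2 * (nabla (e b) (e c)) 0 - h * ((e a) 2 * (nabla (e b) (e c)) 2),
        (e a) 0 * (nabla (e b) (e c)) 1 - h * ((e a) 2 * (nabla (e b) (e c)) 1)]
        - ![-h * ((e b) 0 * (nabla (e a) (e c)) 1) + (e b) 2 * (nabla (e a) (e c)) 1,
        -h * ((e b) 0 * (nabla (e a) (e c)) 0) + (e b) 0 * (nabla (e a) (e c)) 2 + (e b) 2 * (nabla (e a) (e c)) 0 - h * ((e b) 2 * (nabla (e a) (e c)) 2),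
        (e b) 0 * (nabla (e a) (e c)) 1 - h * ((e b) 2 * (nabla (e a) (e c)) 1)]
        - ![-h * ((brVI3 h (e a) (e b)) 0 * (e c) 1) + (brVI3 h (e a) (e b)) 2 * (e c) 1,
        -h * ((brVI3 h (e a) (e b)) 0 * (e c) 0) + (brVI3 h (e a) (e b)) 0 * (e c) 2 + (brVI3 h (e a) (e b)) 2 * (e c) 0 - h * ((brVI3 h (e a) (e b)) 2 * (e c) 2),
        (brVI3 h (e a) (e b)) 0 * (e c) 1 - h * ((brVI3 h (e a) (e b)) 2 * (e c) 1)]) (e d) := by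
    intro a b c d
    rw [Rt, hNab (e a) (nabla (e b) (e c)), hNab (e b) (nabla (e a) (e c)),
      hNab (brVI3 h (e a) (e b)) (e c)]
  have hRval : ∀ a b c d : Fin 3,
      Rt h nabla (e a) (e b) (e c) (e d) = RVaux h a b c d := by
    intro a b c d
    rw [hR a b c d]
    simp only [key]
    fin_cases a <;> fin_cases b <;> fin_cases c <;> fin_cases d <;>
      simp [gB, e, brVI3, NNaux, RVaux, Pi.single_apply, Matrix.vecHead,
        Matrix.vecTail] <;> ring
  have htau : (∑ i, ginv i * ricci h nabla i i) = 2 * (3 * h ^ 2 + 1) := by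
    simp only [ricci, hRval, Fin.sum_univ_three]
    simp [ginv, RVaux, Matrix.vecHead, Matrix.vecTail] <;> ring
  refine ⟨?_, ?_, ?_, ?_, htau, ?_⟩
  · rw [hRval]; simp [RVaux] <;> ring
  · rw [hRval]; simp [RVaux, Matrix.vecHead, Matrix.vecTail] <;> ring
  · rw [hRval]; simp [RVaux, Matrix.vecHead, Matrix.vecTail] <;> ring
  · rw [hRval]; simp [RVaux, Matrix.vecHead, Matrix.vecTail] <;> ring
  · rw [htau]; positivity
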